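/- Let K be a finite index set, for each k let ι k be a finite type, and for each k let A k : Matrix (ι k) (ι k) ℝ with A k = U k * D k * (U k)ᵀ, where each U k is orthogonal and each D k is diagonal. Then for every σ : ℝ, the determinant of the noisy covariance matrix factorizes over multi-indices: det ((⊗ₖ A k) + σ² • 1) = ∏_{i : Π k, ι k} ((∏ k, D k (i k) (i k)) + σ²). -/
import Mathlib


open Matrix

/-- The Kronecker-type product of a finite family of square matrices:
the matrix indexed by `Π k, ι k` whose `(i, j)` entry is `∏ k, A k (i k) (j k)`. -/
noncomputable def kronPi {K : Type*} [Fintype K] [DecidableEq K]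
    {ι : K → Type*} [∀ k, Fintype (ι k)]
    (A : ∀ k, Matrix (ι k) (ι k) ℝ) : Matrix (∀ k, ι k) (∀ k, ι k) ℝ :=
  Matrix.of fun i j => ∏ k, A k (i k) (j k)

theorem kronPi_mul {K : Type*} [Fintype K] [DecidableEq K]
    {ι : K → Type*} [∀ k, Fintype (ι k)] [∀ k, DecidableEq (ι k)]
    (A B : ∀ k, Matrix (ι k) (ι k) ℝ) :
    kronPi (fun k => A k * B k) = kronPi A * kronPi B := by
  ext i j
  simp only [kronPi, Matrix.of_apply, Matrix.mul_apply]
  rw [Fintype.prod_sum (fun k m => A k (i k) m * B k m (j k))]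
  exact Finset.sum_congr rfl fun g _ => Finset.prod_mul_distrib

theorem kronPi_transpose {K : Type*} [Fintype K] [DecidableEq K]
    {ι : K → Type*} [∀ k, Fintype (ι k)]
    (A : ∀ k, Matrix (ι k) (ι k) ℝ) :
    (kronPi A)ᵀ = kronPi (fun k => (A k)ᵀ) := rfl

theorem kronPi_one {K : Type*} [Fintype K] [DecidableEq K]
    {ι : K → Type*} [∀ k, Fintype (ι k)] [∀ k, DecidableEq (ι k)] :
    kronPi (fun k => (1 : Matrix (ι k) (ι k) ℝ)) = 1 := by
  ext i j
  simp only [kronPi, Matrix.of_apply, Matrix.one_apply]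
  by_cases h : i = j
  · subst h; simp
  · rw [if_neg h]
    obtain ⟨k, hk⟩ : ∃ k, i k ≠ j k := by
      by_contra hc
      push_neg at hc
      exact h (funext hc)
    exact Finset.prod_eq_zero (Finset.mem_univ k) (by simp [hk])

theorem kronPi_diag {K : Type*} [Fintype K] [DecidableEq K]
    {ι : K → Type*} [∀ k, Fintype (ι k)] [∀ k, DecidableEq (ι k)]
    (D : ∀ k, Matrix (ι k) (ι k) ℝ) (hD : ∀ k, (D k).IsDiag) :
    kronPi D = Matrix.diagonal (fun i => ∏ k, D k (i k) (i k)) := by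
  ext i j
  by_cases h : i = j
  · subst h; simp [kronPi]
  · rw [Matrix.diagonal_apply_ne _ h]
    obtain ⟨k, hk⟩ : ∃ k, i k ≠ j k := by
      by_contra hc
      push_neg at hc
      exact h (funext hc)
    exact Finset.prod_eq_zero (Finset.mem_univ k) (hD k hk)

/-- Determinant of the noisy covariance matrix: if each `A k = U k * D k * (U k)ᵀ` with
`U k` orthogonal and `D k` diagonal, then
`det ((⊗ₖ A k) + σ² • 1) = ∏ i, ((∏ k, D k (i k) (i k)) + σ²)`. -/
theorem kronPi_add_noise_det {K : Type*} [Fintype K] [DecidableEq K]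
    {ι : K → Type*} [∀ k, Fintype (ι k)] [∀ k, DecidableEq (ι k)]
    (A U D : ∀ k, Matrix (ι k) (ι k) ℝ)
    (hU : ∀ k, U k * (U k)ᵀ = 1)
    (hD : ∀ k, (D k).IsDiag)
    (hA : ∀ k, A k = U k * D k * (U k)ᵀ)
    (σ : ℝ) :
    (kronPi A + σ ^ 2 • 1).det = ∏ i : ∀ k, ι k, ((∏ k, D k (i k) (i k)) + σ ^ 2) := by
  have hKU : kronPi U * (kronPi U)ᵀ = 1 := by
    rw [kronPi_transpose, ← kronPi_mul]
    simp only [hU]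
    exact kronPi_one
  have hKA : kronPi A = kronPi U * kronPi D * (kronPi U)ᵀ := by
    have : A = fun k => U k * (D k * (U k)ᵀ) := by
      funext k; rw [hA k, Matrix.mul_assoc]
    rw [this, kronPi_mul, kronPi_mul, kronPi_transpose, Matrix.mul_assoc]
  have key : kronPi A + σ ^ 2 • 1 =
      kronPi U * (kronPi D + σ ^ 2 • 1) * (kronPi U)ᵀ := by
    rw [Matrix.mul_add, Matrix.add_mul, ← hKA, Matrix.mul_smul, Matrix.mul_one,
      Matrix.smul_mul, hKU]
  rw [key, Matrix.det_mul, Matrix.det_mul, mul_comm, ← mul_assoc, ← Matrix.det_mul,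
    mul_eq_one_comm.mp hKU, Matrix.det_one, one_mul]
  rw [kronPi_diag D hD, Matrix.smul_one_eq_diagonal, Matrix.diagonal_add,
    Matrix.det_diagonal]
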